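/- arXiv:2003.03753 — 3 statements merged into one kernel-verified Lean document; each statement's English description precedes it below -/
import Mathlib

section
/- Let $d = 2$, and let $\Phi: \mathbb{C}^2 \to \mathbb{R}$ be defined by $\Phi(z_1, z_2) = |z_1|^2 + |z_2|^2 + |z_1|^4 + |z_2|^4 + 240 |z_1 z_2|^2$. Then the set $D = \{ z \in \mathbb{C}^2 : \Phi(z) < 1 \}$ is not convex. Specifically, $(0, 1/2) \in D$ and $(1/2, 0) \in D$, but their midpoint $(1/4, 1/4) \notin D$. -/
/-- `Φ(z₁,z₂) = |z₁|² + |z₂|² + |z₁|⁴ + |z₂|⁴ + 240 |z₁z₂|²`. -/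
noncomputable def Phi2 (z : ℂ × ℂ) : ℝ :=
  ‖z.1‖ ^ 2 + ‖z.2‖ ^ 2 + ‖z.1‖ ^ 4 + ‖z.2‖ ^ 4 +
    240 * ‖z.1 * z.2‖ ^ 2

/-- the domain `D = {z : Φ(z) < 1}` contains `(0, 1/2)` and `(1/2, 0)` but not
their midpoint `(1/4, 1/4)`; in particular `D` is not convex. -/
theorem stmt2 :
    ((0, 1/2) : ℂ × ℂ) ∈ {z : ℂ × ℂ | Phi2 z < 1} ∧
    ((1/2, 0) : ℂ × ℂ) ∈ {z : ℂ × ℂ | Phi2 z < 1} ∧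
    ((1/4, 1/4) : ℂ × ℂ) ∉ {z : ℂ × ℂ | Phi2 z < 1} ∧
    ¬ Convex ℝ {z : ℂ × ℂ | Phi2 z < 1} := by
  have h1 : ((0, 1/2) : ℂ × ℂ) ∈ {z : ℂ × ℂ | Phi2 z < 1} := by
    simp [Phi2, map_div₀, map_mul, map_one, Complex.norm_ofNat]
    norm_num
  have h2 : ((1/2, 0) : ℂ × ℂ) ∈ {z : ℂ × ℂ | Phi2 z < 1} := by
    simp [Phi2, map_div₀, map_mul, map_one, Complex.norm_ofNat]
    norm_num
  have h3 : ((1/4, 1/4) : ℂ × ℂ) ∉ {z : ℂ × ℂ | Phi2 z < 1} := by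
    simp only [Set.mem_setOf_eq, not_lt]
    have : Phi2 ((1/4,1/4) : ℂ × ℂ) = 274/256 := by
      simp [Phi2, map_div₀, map_mul, map_one, Complex.norm_ofNat]
      norm_num
    rw [this]; norm_num
  refine ⟨h1, h2, h3, fun hc => h3 ?_⟩
  have := hc h1 h2 (by norm_num : (0:ℝ) ≤ 1/2) (by norm_num : (0:ℝ) ≤ 1/2) (by norm_num)
  have he : ((1/2:ℝ)) • ((0, 1/2) : ℂ × ℂ) + (1/2:ℝ) • ((1/2, 0) : ℂ × ℂ) = ((1/4,1/4) : ℂ × ℂ) := by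
    norm_num [Prod.ext_iff, Complex.real_smul]
  rwa [he] at this
end

section
/- Let $\mathcal{F}(\mathbb{C}^d)$ be the full Fock space over $\mathbb{C}^d$, let $\{Z_k\}$ be a bounded sequence of operators with $Z_k \in B((\mathbb{C}^d)^{\otimes k})$ defined by $Z_k = R_k^{-1}(I \otimes R_{k-1})$, and define the weighted shifts $\tilde W_i$ on $\mathcal{F}(\mathbb{C}^d)$ by $\tilde W_i \theta = Z_{k+1}(e_i \otimes \theta)$ for $\theta \in (\mathbb{C}^d)^{\otimes k}$. Let $\mathcal{F}(\mathcal{R}) = \bigoplus_{k\ge 0} R_k (\mathbb{C}^d)^{\circledS k}$. Then each $\tilde W_i^*$ leaves $\mathcal{F}(\mathcal{R})$ invariant, and for $\xi \in (\mathbb{C}^d)^{\circledS(k+1)}$, $\tilde W_i^* R_{k+1} \xi = R_k L_i^* \xi$, where $L_i : (\mathbb{C}^d)^{\otimes k} \to (\mathbb{C}^d)^{\otimes(k+1)}$ is the creation operator $L_i \theta = e_i \otimes \theta$. -/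
set_option synthInstance.maxHeartbeats 1000000
set_option maxHeartbeats 1000000
open scoped ComplexOrder Matrix
open Filter

/-- Words of length `k` on `d` letters, indexing `(ℂ^d)^{⊗k}`. -/
abbrev Word (d k : ℕ) := Fin k → Fin d

noncomputable def offsetc {n : ℕ} (c : Fin n → ℕ) (i : Fin n) : ℕ :=
  ∑ j ∈ Finset.univ.filter (fun j => j < i), c j

lemma offsetc_add_le {n m : ℕ} (c : Fin n → ℕ) (hc : ∑ j, c j = m) (i : Fin n) :
    offsetc c i + c i ≤ m := by
  classical
  have h : offsetc c i + c i = ∑ j ∈ insert i (Finset.univ.filter (fun j => j < i)), c j := by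
    rw [Finset.sum_insert (by simp), add_comm]; rfl
  rw [h, ← hc]
  exact Finset.sum_le_sum_of_subset (Finset.subset_univ _)

/-- The `i`-th piece of a word `α` of length `m`, split according to a composition `c` of `m`. -/
noncomputable def segmentw {d n m : ℕ} (c : Fin n → ℕ) (hc : ∑ j, c j = m) (i : Fin n)
    (α : Word d m) : Word d (c i) :=
  fun j => α ⟨offsetc c i + j,
    Nat.lt_of_lt_of_le (Nat.add_lt_add_left j.isLt _) (offsetc_add_le c hc i)⟩

/-- Entry `(α, β)` of `X(m,n) = ∑_{k₁+⋯+kₙ=m, kᵢ ≥ 1} X_{k₁} ⊗ ⋯ ⊗ X_{kₙ}`. -/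
noncomputable def tensorEntry {d : ℕ} (X : (k : ℕ) → Matrix (Word d k) (Word d k) ℂ)
    (n m : ℕ) (α β : Word d m) : ℂ :=
  ∑ c ∈ (Finset.Nat.antidiagonalTuple n m).attach,
    if (∀ i, 0 < c.1 i) then
      ∏ i, X (c.1 i) (segmentw c.1 (Finset.Nat.mem_antidiagonalTuple.mp c.2) i α)
                     (segmentw c.1 (Finset.Nat.mem_antidiagonalTuple.mp c.2) i β)
    else 0

/-- Entry `(α, β)` of `R_m² = ∑_{l=1}^m ∑_{compositions of m into l parts} X_{k₁} ⊗ ⋯ ⊗ X_{k_l}`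
(with `R_0² = 1`). -/
noncomputable def R2entry {d : ℕ} (X : (k : ℕ) → Matrix (Word d k) (Word d k) ℂ)
    (m : ℕ) (α β : Word d m) : ℂ :=
  ∑ l ∈ Finset.range (m + 1), tensorEntry X l m α β

/-- Admissibility of the sequence `X` (Definition 2.1): each `X_k` positive, `X_1` invertible,
and `limsup ‖X_k‖^{1/k} < ∞`. -/
def Admissible {d : ℕ} (X : (k : ℕ) → Matrix (Word d k) (Word d k) ℂ) : Prop :=
  (∀ k, 1 ≤ k → (X k).PosSemidef) ∧ IsUnit (X 1) ∧ ∃ C : ℝ, ∀ k (α β : Word d k), ‖X k α β‖ ≤ C ^ k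

/-- The matrix of `I_{ℂ^d} ⊗ M` on `(ℂ^d)^{⊗(k+1)} = ℂ^d ⊗ (ℂ^d)^{⊗k}`. -/
noncomputable def consTensor {d k : ℕ} (M : Matrix (Word d k) (Word d k) ℂ) :
    Matrix (Word d (k+1)) (Word d (k+1)) ℂ :=
  Matrix.of fun α β => if α 0 = β 0 then M (Fin.tail α) (Fin.tail β) else 0

/-- The matrix of the creation operator `L_i : θ ↦ e_i ⊗ θ`. -/
noncomputable def LiMat (d k : ℕ) (i : Fin d) : Matrix (Word d (k+1)) (Word d k) ℂ :=
  Matrix.of fun α β => if α 0 = i ∧ Fin.tail α = β then 1 else 0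

/-- `Z_{k+1} = R_{k+1}⁻¹ (I ⊗ R_k)`. -/
noncomputable def Zmat {d : ℕ} (R Rinv : (k : ℕ) → Matrix (Word d k) (Word d k) ℂ) (k : ℕ) :
    Matrix (Word d (k+1)) (Word d (k+1)) ℂ :=
  Rinv (k+1) * consTensor (R k)

/-- Permutation invariance: `w` represents an element of the symmetric part
`(ℂ^d)^{⊛k} ⊗ V ⊆ (ℂ^d)^{⊗k} ⊗ V`. -/
def SymVec {d k : ℕ} {V : Type*} (w : Word d k → V) : Prop :=
  ∀ (π : Equiv.Perm (Fin k)) (α : Word d k), w (α ∘ π) = w α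

/-- The full Fock space of `ℂ^d` tensored with `V`, realized as an `ℓ²`-direct sum of the
spaces of `V`-valued functions on words. -/
noncomputable abbrev FockV (d : ℕ) (V : Type*) [NormedAddCommGroup V]
    [InnerProductSpace ℂ V] :=
  lp (fun k : ℕ => PiLp 2 (fun _ : Word d k => V)) 2

/-- The level-`k` component of an element of the Fock space. -/
noncomputable def fockComp {d : ℕ} {V : Type*} [NormedAddCommGroup V] [InnerProductSpace ℂ V]
    (x : FockV d V) (k : ℕ) : Word d k → V :=
  fun α => (x : ∀ k, PiLp 2 fun _ : Word d k => V) k α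

/-- A complex matrix applied to a `V`-valued vector. -/
noncomputable def mvec {d k k' : ℕ} {V : Type*} [NormedAddCommGroup V] [InnerProductSpace ℂ V]
    (M : Matrix (Word d k) (Word d k') ℂ) (v : Word d k' → V) : Word d k → V :=
  fun α => ∑ β, M α β • v β

/-- The subspace `F(R) ⊗ V` of the Fock space: the level-`k` component lies in
`R_k((ℂ^d)^{⊛k}) ⊗ V`. -/
def SymRSet {d : ℕ} (R : (k : ℕ) → Matrix (Word d k) (Word d k) ℂ)
    (V : Type*) [NormedAddCommGroup V] [InnerProductSpace ℂ V] : Set (FockV d V) :=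
  {x | ∀ k, ∃ w : Word d k → V, SymVec w ∧ fockComp x k = mvec (R k) w}

/-- `Wt` is the weighted shift `W̃_i ⊗ I_V` : `θ ↦ Z_{k+1} (e_i ⊗ θ)` on each level. -/
def IsWeightedShift {d : ℕ} (R Rinv : (k : ℕ) → Matrix (Word d k) (Word d k) ℂ)
    {V : Type*} [NormedAddCommGroup V] [InnerProductSpace ℂ V]
    (i : Fin d) (Wt : FockV d V →L[ℂ] FockV d V) : Prop :=
  ∀ x : FockV d V, fockComp (Wt x) 0 = 0 ∧
    ∀ k, fockComp (Wt x) (k+1) = mvec (Zmat R Rinv k * LiMat d k i) (fockComp x k)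


section AuxStmt11
variable {d : ℕ}

lemma mvec_mul {k k' k'' : ℕ} (M : Matrix (Word d k) (Word d k') ℂ)
    (N : Matrix (Word d k') (Word d k'') ℂ) (v : Word d k'' → ℂ) :
    mvec M (mvec N v) = mvec (M * N) v := by
  funext α
  simp only [mvec, Matrix.mul_apply, Finset.smul_sum, Finset.sum_smul, smul_smul]
  rw [Finset.sum_comm]

lemma mvec_apply {k k' : ℕ} (M : Matrix (Word d k) (Word d k') ℂ)
    (v : Word d k' → ℂ) (α : Word d k) : mvec M v α = ∑ β, M α β • v β := rfl

lemma mvec_zero {k k' : ℕ} (M : Matrix (Word d k) (Word d k') ℂ) :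
    mvec M (0 : Word d k' → ℂ) = 0 := by
  funext α
  simp [mvec]

lemma consTensor_conjTranspose {k : ℕ} (M : Matrix (Word d k) (Word d k) ℂ) :
    (consTensor M)ᴴ = consTensor Mᴴ := by
  ext α β
  simp only [Matrix.conjTranspose_apply, consTensor, Matrix.of_apply]
  by_cases h : α 0 = β 0
  · rw [if_pos h, if_pos h.symm]
  · rw [if_neg h, if_neg (fun hh => h hh.symm), star_zero]

lemma mvec_LiH {k : ℕ} (i : Fin d) (ξ : Word d (k+1) → ℂ) :
    mvec (LiMat d k i)ᴴ ξ = fun γ => ξ (Fin.cons i γ) := by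
  funext γ
  simp only [mvec, Matrix.conjTranspose_apply, LiMat, Matrix.of_apply]
  rw [Finset.sum_eq_single (Fin.cons i γ)]
  · simp
  · intro β _ hβ
    have : ¬ (β 0 = i ∧ Fin.tail β = γ) := by
      rintro ⟨h1, h2⟩; exact hβ (by rw [← Fin.cons_self_tail β, h1, h2])
    simp [this]
  · simp

lemma LiH_mul_consTensor {k : ℕ} (i : Fin d) (M : Matrix (Word d k) (Word d k) ℂ) :
    (LiMat d k i)ᴴ * consTensor M = M * (LiMat d k i)ᴴ := by
  ext γ β
  rw [Matrix.mul_apply, Matrix.mul_apply]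
  rw [Finset.sum_eq_single (Fin.cons i γ)]
  · rw [Finset.sum_eq_single (Fin.tail β)]
    · simp only [Matrix.conjTranspose_apply, LiMat, consTensor, Matrix.of_apply,
        Fin.cons_zero, Fin.tail_cons, and_true]
      rcases eq_or_ne (β 0) i with h | h
      · simp [h]
      · simp [h, Ne.symm h]
    · intro δ _ hδ
      have : ¬ (β 0 = i ∧ Fin.tail β = δ) := fun hh => hδ hh.2.symm
      simp [LiMat, this]
    · simp
  · intro α _ hα
    have : ¬ (α 0 = i ∧ Fin.tail α = γ) := by
      rintro ⟨h1, h2⟩; exact hα (by rw [← Fin.cons_self_tail α, h1, h2])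
    simp [LiMat, this]
  · simp

end AuxStmt11

/-- the weighted shifts `W̃_i` satisfy `W̃_i^* F(R) ⊆ F(R)` and
`W̃_i^* R_{k+1} ξ = R_k L_i^* ξ` for symmetric `ξ`. -/
theorem stmt11 {d : ℕ} (X : (k : ℕ) → Matrix (Word d k) (Word d k) ℂ) (hX : Admissible X)
    (R Rinv : (k : ℕ) → Matrix (Word d k) (Word d k) ℂ)
    (hRpos : ∀ k, (R k).PosSemidef)
    (hRsq : ∀ k, R k * R k = Matrix.of (R2entry X k))
    (hRinv : ∀ k, R k * Rinv k = 1 ∧ Rinv k * R k = 1)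
    (hZbdd : ∃ C : ℝ, ∀ k : ℕ, ((C : ℂ) • (1 : Matrix (Word d (k+1)) (Word d (k+1)) ℂ) -
      Zmat R Rinv k * (Zmat R Rinv k)ᴴ).PosSemidef)
    (i : Fin d) (Wt : FockV d ℂ →L[ℂ] FockV d ℂ) (hWt : IsWeightedShift R Rinv i Wt) :
    (∀ x ∈ SymRSet R ℂ, (ContinuousLinearMap.adjoint Wt) x ∈ SymRSet R ℂ) ∧
    (∀ (k : ℕ) (ξ : Word d (k+1) → ℂ), SymVec ξ →
      mvec ((Zmat R Rinv k * LiMat d k i)ᴴ) (mvec (R (k+1)) ξ) =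
        mvec (R k) (fun γ => ξ (Fin.cons i γ))) := by
  classical
  have hRH : ∀ k, (R k)ᴴ = R k := fun k => (hRpos k).1
  have hRinvH : ∀ k, (Rinv k)ᴴ = Rinv k := by
    intro k
    calc (Rinv k)ᴴ = (Rinv k)ᴴ * (R k * Rinv k) := by rw [(hRinv k).1, mul_one]
      _ = (R k * Rinv k)ᴴ * Rinv k := by
          rw [← Matrix.mul_assoc, Matrix.conjTranspose_mul, hRH]
      _ = Rinv k := by rw [(hRinv k).1, Matrix.conjTranspose_one, one_mul]
  have hkey : ∀ k, (Zmat R Rinv k * LiMat d k i)ᴴ * R (k+1) = R k * (LiMat d k i)ᴴ := by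
    intro k
    calc (Zmat R Rinv k * LiMat d k i)ᴴ * R (k+1)
        = (LiMat d k i)ᴴ * consTensor (R k) * (Rinv (k+1) * R (k+1)) := by
          rw [Matrix.conjTranspose_mul, Zmat, Matrix.conjTranspose_mul,
              consTensor_conjTranspose, hRH, hRinvH]
          simp only [Matrix.mul_assoc]
      _ = (LiMat d k i)ᴴ * consTensor (R k) := by rw [(hRinv (k+1)).2, Matrix.mul_one]
      _ = R k * (LiMat d k i)ᴴ := LiH_mul_consTensor i (R k)
  have part2 : ∀ (k : ℕ) (ξ : Word d (k+1) → ℂ),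
      mvec ((Zmat R Rinv k * LiMat d k i)ᴴ) (mvec (R (k+1)) ξ) =
        mvec (R k) (fun γ => ξ (Fin.cons i γ)) := by
    intro k ξ
    rw [mvec_mul, hkey, ← mvec_mul, mvec_LiH]
  have hcomp : ∀ (y : FockV d ℂ) (k : ℕ) (α : Word d k),
      fockComp y k α
        = inner (𝕜 := ℂ) (lp.single 2 k (EuclideanSpace.single α (1:ℂ))) y := by
    intro y k α
    rw [lp.inner_single_left, EuclideanSpace.inner_single_left]
    simp [fockComp]
  have hWtsingle : ∀ (k : ℕ) (v : PiLp 2 (fun _ : Word d k => ℂ)),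
      Wt (lp.single 2 k v) = lp.single 2 (k+1)
        (WithLp.toLp 2 (mvec (Zmat R Rinv k * LiMat d k i) v)) := by
    intro k v
    apply lp.ext
    funext m
    match m with
    | 0 =>
      have h0 := (hWt (lp.single 2 k v)).1
      rw [lp.single_apply_ne 2 (k+1) _ (Nat.succ_ne_zero k).symm]
      ext β
      exact congrFun h0 β
    | (n+1) =>
      have h := (hWt (lp.single 2 k v)).2 n
      rcases eq_or_ne n k with rfl | hnk
      · rw [lp.single_apply_self]
        have hv : fockComp (lp.single 2 n v) n = v := by
          funext β
          exact congrFun (congrArg WithLp.ofLp (lp.single_apply_self (E := fun k => PiLp 2 (fun _ : Word d k => ℂ)) 2 n v)) β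
        rw [hv] at h
        ext β
        exact congrFun h β
      · rw [lp.single_apply_ne 2 (k+1) _ (fun hh => hnk (Nat.succ_injective hh))]
        have hv : fockComp (lp.single 2 k v) n = 0 := by
          funext β
          exact congrFun (congrArg WithLp.ofLp (lp.single_apply_ne (E := fun k => PiLp 2 (fun _ : Word d k => ℂ)) 2 k v hnk)) β
        rw [hv, mvec_zero] at h
        ext β
        exact congrFun h β
  have hadj : ∀ (x : FockV d ℂ) (k : ℕ),
      fockComp ((ContinuousLinearMap.adjoint Wt) x) k
        = mvec ((Zmat R Rinv k * LiMat d k i)ᴴ) (fockComp x (k+1)) := by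
    intro x k
    funext α
    rw [hcomp, ContinuousLinearMap.adjoint_inner_right, hWtsingle,
        lp.inner_single_left, PiLp.inner_apply]
    have hu : ∀ β, mvec (Zmat R Rinv k * LiMat d k i) (EuclideanSpace.single α (1:ℂ)) β
        = (Zmat R Rinv k * LiMat d k i) β α := by
      intro β
      simp [mvec, EuclideanSpace.single_apply]
    simp only [RCLike.inner_apply]
    rw [mvec_apply]
    refine Finset.sum_congr rfl fun β _ => ?_
    rw [hu β, Matrix.conjTranspose_apply, smul_eq_mul, mul_comm]
    rfl
  refine ⟨?_, fun k ξ _ => part2 k ξ⟩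
  rintro x hx k
  obtain ⟨w, hws, hwe⟩ := hx (k+1)
  refine ⟨fun γ => w (Fin.cons i γ), ?_, ?_⟩
  · intro π γ
    let π' : Equiv.Perm (Fin (k+1)) :=
      { toFun := Fin.cons 0 (Fin.succ ∘ π)
        invFun := Fin.cons 0 (Fin.succ ∘ π.symm)
        left_inv := by
          intro j
          refine Fin.cases ?_ (fun j => ?_) j <;> simp
        right_inv := by
          intro j
          refine Fin.cases ?_ (fun j => ?_) j <;> simp }
    have hc : (Fin.cons i γ) ∘ π' = Fin.cons i (γ ∘ π) := by
      funext j
      refine Fin.cases ?_ (fun j => ?_) j <;> simp [π']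
    show w (Fin.cons i (γ ∘ π)) = w (Fin.cons i γ)
    calc w (Fin.cons i (γ ∘ π)) = w ((Fin.cons i γ) ∘ π') := by rw [hc]
      _ = w (Fin.cons i γ) := hws π' _
  · rw [hadj x k, hwe]
    exact part2 k w
end

section
/- Let $T = (T_1, \dots, T_d)$ be a commuting tuple with $\Phi_T(I) \le I$ and $\Phi_T^n(I) \searrow 0$ (i.e., $T \in \overline{D}_{cp}(X,H)$). Set $\Delta_*(T) = (I_H - \Phi_T(I))^{1/2}$. Then the Poisson-type map $\Pi(T) : H \to \mathcal{F}(\mathcal{R}) \otimes \overline{\Delta_*(T)H}$ given by $\Pi(T) h = \bigoplus_{k \ge 0} (R_k \otimes \Delta_*(T)) T^{(k)*} h$ is a well-defined isometry, and it intertwines: $\Pi(T) T_i^* = (W_i^* \otimes I) \Pi(T)$ for every $1 \le i \le d$. -/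
set_option synthInstance.maxHeartbeats 1000000
set_option maxHeartbeats 1000000
open scoped ComplexOrder Matrix
open Filter

/-- `T_α = T_{α(1)} ⋯ T_{α(k)}` for a word `α` of length `k`. -/
noncomputable def Tword {H : Type*} [NormedAddCommGroup H] [InnerProductSpace ℂ H]
    {d : ℕ} (T : Fin d → H →L[ℂ] H) {k : ℕ} (α : Word d k) : H →L[ℂ] H :=
  (List.ofFn (fun i => T (α i))).prod

section Toolkit
variable {H : Type*} [NormedAddCommGroup H] [InnerProductSpace ℂ H]
  {d : ℕ} (T : Fin d → H →L[ℂ] H)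

lemma Tword_nil (α : Word d 0) : Tword T α = 1 := by
  simp [Tword, List.ofFn_zero]

lemma Tword_cons {k : ℕ} (t : Fin d) (ρ : Word d k) :
    Tword T (Fin.cons t ρ : Word d (k+1)) = T t ∘L Tword T ρ := by
  simp only [Tword, List.ofFn_succ, Fin.cons_zero, Fin.cons_succ, List.prod_cons]
  rfl

/-- sum over words of length k+1 as double sum -/
lemma sum_word_succ {M : Type*} [AddCommMonoid M] {k : ℕ} (f : Word d (k+1) → M) :
    ∑ β : Word d (k+1), f β = ∑ x : Fin d, ∑ ρ : Word d k, f (Fin.cons x ρ) := by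
  rw [← (Fin.consEquiv (fun _ : Fin (k+1) => Fin d)).sum_comp f]
  rw [Fintype.sum_prod_type]
  rfl

end Toolkit


section Comb
variable {d : ℕ} (X : (k : ℕ) → Matrix (Word d k) (Word d k) ℂ)

/-- first `a` letters -/
def takeW {d : ℕ} (a : ℕ) {n : ℕ} (h : a ≤ n) (α : Word d n) : Word d a :=
  fun j => α ⟨j, by have := j.isLt; omega⟩

/-- all but the first `a` letters -/
def dropW {d : ℕ} (a : ℕ) {n : ℕ} (α : Word d n) : Word d (n - a) :=
  fun j => α ⟨a + j, by have := j.isLt; omega⟩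

/-- normalized summand for `tensorEntry` -/
noncomputable def GG (l n : ℕ) (α β : Word d n) (c : Fin l → ℕ) : ℂ :=
  if hc : ∑ j, c j = n then
    (if ∀ i, 0 < c i then ∏ i, X (c i) (segmentw c hc i α) (segmentw c hc i β) else 0)
  else 0

lemma tensorEntry_eq_sum_adT (l n : ℕ) (α β : Word d n) :
    tensorEntry X l n α β = ∑ c ∈ Finset.Nat.antidiagonalTuple l n, GG X l n α β c := by
  rw [tensorEntry, ← Finset.sum_attach (Finset.Nat.antidiagonalTuple l n) (GG X l n α β)]
  refine Finset.sum_congr rfl (fun c _ => ?_)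
  rw [GG, dif_pos (Finset.Nat.mem_antidiagonalTuple.mp c.2)]

lemma tensorEntry_eq_sum_pi (l n N : ℕ) (hnN : n ≤ N) (α β : Word d n) :
    tensorEntry X l n α β = ∑ f : Fin l → Fin (N+1), GG X l n α β (fun j => (f j : ℕ)) := by
  rw [tensorEntry_eq_sum_adT]
  have hsub : Finset.Nat.antidiagonalTuple l n ⊆
      Fintype.piFinset (fun _ : Fin l => Finset.range (N+1)) := by
    intro c hc
    rw [Finset.Nat.mem_antidiagonalTuple] at hc
    rw [Fintype.mem_piFinset]
    intro j
    rw [Finset.mem_range]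
    have : c j ≤ ∑ j', c j' := Finset.single_le_sum (fun _ _ => Nat.zero_le _) (Finset.mem_univ j)
    omega
  rw [Finset.sum_subset hsub (fun c _ hc => by
    rw [Finset.Nat.mem_antidiagonalTuple] at hc
    rw [GG, dif_neg hc])]
  refine Finset.sum_nbij' (fun c => fun j => (⟨min (c j) N, by omega⟩ : Fin (N+1)))
    (fun f => fun j => (f j : ℕ)) ?_ ?_ ?_ ?_ ?_
  · intro a _; exact Finset.mem_univ _
  · intro f _
    rw [Fintype.mem_piFinset]
    intro j; rw [Finset.mem_range]; exact (f j).isLt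
  · intro c hc
    rw [Fintype.mem_piFinset] at hc
    funext j
    have := hc j; rw [Finset.mem_range] at this
    simp only []
    omega
  · intro f _
    funext j
    have := (f j).isLt
    exact Fin.ext (by simp only []; omega)
  · intro c hc
    rw [Fintype.mem_piFinset] at hc
    congr 1
    funext j
    have := hc j; rw [Finset.mem_range] at this
    simp only []
    omega

lemma sum_pi_succ {κ M : Type*} [Fintype κ] [DecidableEq κ] [AddCommMonoid M] {k : ℕ}
    (f : (Fin (k+1) → κ) → M) :
    ∑ β : Fin (k+1) → κ, f β = ∑ x : κ, ∑ ρ : Fin k → κ, f (Fin.cons x ρ) := by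
  rw [← (Fin.consEquiv (fun _ : Fin (k+1) => κ)).sum_comp f, Fintype.sum_prod_type]
  rfl

lemma offsetc_zero {l : ℕ} (c : Fin (l+1) → ℕ) : offsetc c 0 = 0 := by
  rw [offsetc]
  rw [Finset.filter_false_of_mem (fun j _ => Fin.not_lt_zero j)]
  exact Finset.sum_empty

lemma offsetc_cons_succ {l : ℕ} (x : ℕ) (g : Fin l → ℕ) (i : Fin l) :
    offsetc (Fin.cons x g : Fin (l+1) → ℕ) i.succ = x + offsetc g i := by
  rw [offsetc, offsetc, Finset.sum_filter, Finset.sum_filter, Fin.sum_univ_succ]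
  rw [if_pos (Fin.succ_pos i)]
  congr 1
  refine Finset.sum_congr rfl (fun j _ => ?_)
  rw [Fin.cons_succ]
  congr 1
  simp [Fin.succ_lt_succ_iff]

lemma segmentw_cons_zero {l n : ℕ} (x : ℕ) (g : Fin l → ℕ)
    (hc : ∑ j, (Fin.cons x g : Fin (l+1) → ℕ) j = n) (hxn : x ≤ n) (α : Word d n) :
    segmentw (Fin.cons x g : Fin (l+1) → ℕ) hc 0 α = takeW x hxn α := by
  funext j
  refine congrArg α (Fin.ext ?_)
  simp [segmentw, takeW, offsetc_zero]

lemma segmentw_cons_succ {l n : ℕ} (x : ℕ) (g : Fin l → ℕ)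
    (hc : ∑ j, (Fin.cons x g : Fin (l+1) → ℕ) j = n)
    (hc' : ∑ j, g j = n - x) (i : Fin l) (α : Word d n) :
    segmentw (Fin.cons x g : Fin (l+1) → ℕ) hc i.succ α
      = segmentw g hc' i (dropW x α) := by
  funext j
  refine congrArg α (Fin.ext ?_)
  simp only [segmentw, dropW, offsetc_cons_succ]
  omega

lemma GG_cons_pos {l n x : ℕ} (g : Fin l → ℕ) (α β : Word d n) (hx1 : 1 ≤ x) (hxn : x ≤ n) :
    GG X (l+1) n α β (Fin.cons x g)
      = X x (takeW x hxn α) (takeW x hxn β) * GG X l (n-x) (dropW x α) (dropW x β) g := by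
  rw [GG, GG]
  by_cases hc : ∑ j, (Fin.cons x g : Fin (l+1) → ℕ) j = n
  · have hsum : x + ∑ j, g j = n := by rw [Fin.sum_cons] at hc; exact hc
    have hc2 : ∑ j, g j = n - x := by omega
    rw [dif_pos hc, dif_pos hc2]
    by_cases hg : ∀ i, 0 < g i
    · have hall : ∀ i, 0 < (Fin.cons x g : Fin (l+1) → ℕ) i := by
        intro i
        refine Fin.cases ?_ (fun i' => ?_) i
        · rw [Fin.cons_zero]; omega
        · rw [Fin.cons_succ]; exact hg i'
      rw [if_pos hall, if_pos hg, Fin.prod_univ_succ]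
      congr 1
      · rw [segmentw_cons_zero x g hc hxn α, segmentw_cons_zero x g hc hxn β]
        rfl
      · refine Finset.prod_congr rfl (fun i _ => ?_)
        rw [segmentw_cons_succ x g hc hc2 i α, segmentw_cons_succ x g hc hc2 i β]
        rfl
    · rw [if_neg hg, mul_zero, if_neg (fun hall => hg (fun i => by
        have := hall i.succ; rwa [Fin.cons_succ] at this))]
  · rw [dif_neg hc]
    have : ¬ (∑ j, g j = n - x) := by
      rw [Fin.sum_cons] at hc; omega
    rw [dif_neg this, mul_zero]

lemma GG_cons_zero {l n : ℕ} (g : Fin l → ℕ) (α β : Word d n) :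
    GG X (l+1) n α β (Fin.cons 0 g) = 0 := by
  rw [GG]
  split
  · rw [if_neg]
    intro hall
    have := hall 0
    rw [Fin.cons_zero] at this
    omega
  · rfl

lemma tensorEntry_succ (l n : ℕ) (α β : Word d n) :
    tensorEntry X (l+1) n α β
      = ∑ x : Fin (n+1), (if 1 ≤ (x:ℕ) then
          X x (takeW x (Nat.lt_succ_iff.mp x.isLt) α) (takeW x (Nat.lt_succ_iff.mp x.isLt) β)
            * tensorEntry X l (n - x) (dropW x α) (dropW x β)
        else 0) := by
  rw [tensorEntry_eq_sum_pi X (l+1) n n (le_refl n), sum_pi_succ]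
  refine Finset.sum_congr rfl (fun x _ => ?_)
  have hxn : (x:ℕ) ≤ n := Nat.lt_succ_iff.mp x.isLt
  by_cases hx1 : 1 ≤ (x:ℕ)
  · rw [if_pos hx1]
    have : ∀ ρ : Fin l → Fin (n+1),
        GG X (l+1) n α β (fun j => ((Fin.cons x ρ : Fin (l+1) → Fin (n+1)) j : ℕ))
          = X x (takeW x hxn α) (takeW x hxn β)
            * GG X l (n-x) (dropW x α) (dropW x β) (fun j => (ρ j : ℕ)) := by
      intro ρ
      have hco : (fun j => ((Fin.cons x ρ : Fin (l+1) → Fin (n+1)) j : ℕ))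
          = Fin.cons (x:ℕ) (fun j => (ρ j : ℕ)) := by
        funext j
        refine Fin.cases ?_ (fun j' => ?_) j <;> simp
      rw [hco, GG_cons_pos X _ α β hx1 hxn]
    rw [Finset.sum_congr rfl (fun ρ _ => this ρ), ← Finset.mul_sum]
    congr 1
    rw [tensorEntry_eq_sum_pi X l (n-x) n (by omega)]
  · rw [if_neg hx1]
    have hx0 : (x:ℕ) = 0 := by omega
    refine Finset.sum_eq_zero (fun ρ _ => ?_)
    have hco : (fun j => ((Fin.cons x ρ : Fin (l+1) → Fin (n+1)) j : ℕ))
        = Fin.cons (0:ℕ) (fun j => (ρ j : ℕ)) := by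
      funext j
      refine Fin.cases ?_ (fun j' => ?_) j <;> simp [hx0]
    rw [hco, GG_cons_zero]

lemma tensorEntry_zero_succ (n : ℕ) (α β : Word d (n+1)) :
    tensorEntry X 0 (n+1) α β = 0 := by
  rw [tensorEntry_eq_sum_adT]
  refine Finset.sum_eq_zero (fun c _ => ?_)
  rw [GG, dif_neg (by simp)]

lemma R2entry_zero (α β : Word d 0) : R2entry X 0 α β = 1 := by
  rw [R2entry, Finset.sum_range_one, tensorEntry_eq_sum_pi X 0 0 0 (le_refl 0)]
  rw [Fintype.sum_unique]
  rw [GG, dif_pos (by simp)]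
  rw [if_pos (fun i => Fin.elim0 i)]
  exact Finset.prod_of_isEmpty _

lemma tensorEntry_gt {l m : ℕ} (hlm : m < l) (α β : Word d m) :
    tensorEntry X l m α β = 0 := by
  rw [tensorEntry_eq_sum_adT]
  refine Finset.sum_eq_zero (fun c _ => ?_)
  rw [GG]
  split
  · rename_i hc
    rw [if_neg]
    intro hall
    have : (l:ℕ) ≤ ∑ j, c j := by
      calc (l:ℕ) = ∑ _j : Fin l, 1 := by simp
        _ ≤ ∑ j, c j := Finset.sum_le_sum (fun j _ => hall j)
    omega
  · rfl

lemma R2entry_succ (k : ℕ) (α β : Word d (k+1)) :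
    R2entry X (k+1) α β
      = ∑ x : Fin (k+2), (if 1 ≤ (x:ℕ) then
          X x (takeW x (Nat.lt_succ_iff.mp x.isLt) α) (takeW x (Nat.lt_succ_iff.mp x.isLt) β)
            * R2entry X (k+1-x) (dropW x α) (dropW x β)
        else 0) := by
  rw [R2entry, Finset.sum_range_succ']
  rw [tensorEntry_zero_succ, add_zero]
  rw [Finset.sum_congr rfl (fun l _ => tensorEntry_succ X l (k+1) α β), Finset.sum_comm]
  refine Finset.sum_congr rfl (fun x _ => ?_)
  by_cases hx1 : 1 ≤ (x:ℕ)
  · simp only [if_pos hx1]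
    rw [← Finset.mul_sum]
    congr 1
    rw [R2entry]
    symm
    refine Finset.sum_subset (fun l hl => ?_) (fun l _ hl => ?_)
    · rw [Finset.mem_range] at *; omega
    · rw [Finset.mem_range] at hl
      exact tensorEntry_gt X (by omega) _ _
  · simp only [if_neg hx1, Finset.sum_const_zero]

end Comb

section Part2
variable {H : Type*} [NormedAddCommGroup H] [InnerProductSpace ℂ H] [CompleteSpace H]
  {d : ℕ}

lemma part2 (T : Fin d → H →L[ℂ] H)
    (R Rinv : (k : ℕ) → Matrix (Word d k) (Word d k) ℂ)
    (hRpos : ∀ k, (R k).PosSemidef)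
    (hRinv : ∀ k, R k * Rinv k = 1 ∧ Rinv k * R k = 1)
    (Δ : H →L[ℂ] H)
    (i : Fin d) (k : ℕ) (α : Word d k) (h : H) :
    (∑ β : Word d k,
        R k α β • Δ ((ContinuousLinearMap.adjoint (Tword T β))
          ((ContinuousLinearMap.adjoint (T i)) h))) =
      ∑ γ : Word d (k+1), (starRingEnd ℂ) ((Zmat R Rinv k * LiMat d k i) γ α) •
        (∑ β : Word d (k+1),
          R (k+1) γ β • Δ ((ContinuousLinearMap.adjoint (Tword T β)) h)) := by
  classical
  set M := Zmat R Rinv k * LiMat d k i with hM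
  -- hermitian facts
  have hH : ∀ j, (R j)ᴴ = R j := fun j => (hRpos j).isHermitian
  have hRinvH : (Rinv (k+1))ᴴ = Rinv (k+1) := by
    have h1 : (Rinv (k+1))ᴴ * R (k+1) = 1 := by
      have := congrArg Matrix.conjTranspose (hRinv (k+1)).1
      rwa [Matrix.conjTranspose_mul, Matrix.conjTranspose_one, hH] at this
    calc (Rinv (k+1))ᴴ = (Rinv (k+1))ᴴ * (R (k+1) * Rinv (k+1)) := by
            rw [(hRinv (k+1)).1, mul_one]
      _ = ((Rinv (k+1))ᴴ * R (k+1)) * Rinv (k+1) := by rw [mul_assoc]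
      _ = Rinv (k+1) := by rw [h1, one_mul]
  have hconsH : (consTensor (R k))ᴴ = consTensor (R k) := by
    ext a b
    simp only [Matrix.conjTranspose_apply, consTensor, Matrix.of_apply]
    by_cases hab : a 0 = b 0
    · rw [if_pos hab, if_pos hab.symm]
      rw [← Matrix.conjTranspose_apply, hH]
    · rw [if_neg hab, if_neg (fun hc => hab hc.symm), star_zero]
  -- key matrix identity
  have key : Mᴴ * R (k+1) = (LiMat d k i)ᴴ * consTensor (R k) := by
    rw [hM, Zmat, Matrix.conjTranspose_mul, Matrix.conjTranspose_mul, hconsH, hRinvH]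
    simp only [Matrix.mul_assoc]
    rw [(hRinv (k+1)).2, mul_one]
  have entry : ∀ β : Word d (k+1),
      ((LiMat d k i)ᴴ * consTensor (R k)) α β
        = if i = β 0 then R k α (Fin.tail β) else 0 := by
    intro β
    rw [Matrix.mul_apply]
    rw [Finset.sum_eq_single (Fin.cons i α : Word d (k+1))]
    · simp [Matrix.conjTranspose_apply, LiMat, consTensor, Matrix.of_apply,
        Fin.cons_zero, Fin.tail_cons]
    · intro δ _ hδ
      have : ¬ (δ 0 = i ∧ Fin.tail δ = α) := by
        rintro ⟨h1, h2⟩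
        exact hδ (by rw [← h1, ← h2, Fin.cons_self_tail])
      simp only [Matrix.conjTranspose_apply, LiMat, Matrix.of_apply, if_neg this, star_zero,
        zero_mul]
    · intro hc; exact absurd (Finset.mem_univ _) hc
  -- rewrite RHS
  have rhs_eq : ∑ γ : Word d (k+1), (starRingEnd ℂ) (M γ α) •
        (∑ β : Word d (k+1), R (k+1) γ β • Δ ((ContinuousLinearMap.adjoint (Tword T β)) h))
      = ∑ β : Word d (k+1), (if i = β 0 then R k α (Fin.tail β) else 0) •
          Δ ((ContinuousLinearMap.adjoint (Tword T β)) h) := by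
    simp only [Finset.smul_sum, smul_smul]
    rw [Finset.sum_comm]
    refine Finset.sum_congr rfl (fun β _ => ?_)
    rw [← Finset.sum_smul]
    congr 1
    have : ∑ γ : Word d (k+1), (starRingEnd ℂ) (M γ α) * R (k+1) γ β
        = (Mᴴ * R (k+1)) α β := by
      rw [Matrix.mul_apply]
      refine Finset.sum_congr rfl (fun γ _ => ?_)
      rw [Matrix.conjTranspose_apply]
      rfl
    rw [this, key, entry β]
  rw [rhs_eq, sum_word_succ (fun β => (if i = β 0 then R k α (Fin.tail β) else 0) •
      Δ ((ContinuousLinearMap.adjoint (Tword T β)) h))]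
  rw [Finset.sum_eq_single i]
  · refine Finset.sum_congr rfl (fun ρ _ => ?_)
    rw [Fin.cons_zero, if_pos rfl, Fin.tail_cons, Tword_cons, ContinuousLinearMap.adjoint_comp]
    rfl
  · intro x _ hx
    refine Finset.sum_eq_zero (fun ρ _ => ?_)
    rw [Fin.cons_zero, if_neg (fun hc => hx hc.symm), zero_smul]
  · intro hc; exact absurd (Finset.mem_univ _) hc

end Part2

section CastW
variable {d : ℕ}

def castW {n n' : ℕ} (h : n = n') (α : Word d n) : Word d n' :=
  fun i => α ⟨i, by have := i.isLt; omega⟩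

lemma castW_rfl {n : ℕ} (α : Word d n) : castW rfl α = α := by
  funext i; exact congrArg α (Fin.ext rfl)

lemma R2entry_castW (X : (k : ℕ) → Matrix (Word d k) (Word d k) ℂ)
    {n n' : ℕ} (h : n = n') (α β : Word d n) :
    R2entry X n' (castW h α) (castW h β) = R2entry X n α β := by
  subst h; rw [castW_rfl, castW_rfl]

lemma R2entry_succ' (X : (k : ℕ) → Matrix (Word d k) (Word d k) ℂ) (k : ℕ)
    (α β : Word d (k+1)) :
    R2entry X (k+1) α β = ∑ m ∈ Finset.range (k+1),
      (if h : m + 1 ≤ k + 1 then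
        X (m+1) (takeW (m+1) h α) (takeW (m+1) h β)
          * R2entry X (k-m) (castW (by omega) (dropW (m+1) α))
              (castW (by omega) (dropW (m+1) β))
      else 0) := by
  rw [R2entry_succ, Fin.sum_univ_succ]
  have h0 : ¬ (1 ≤ ((0 : Fin (k+2)) : ℕ)) := by simp
  rw [if_neg h0, zero_add]
  rw [← Fin.sum_univ_eq_sum_range (fun m => if h : m + 1 ≤ k + 1 then
        X (m+1) (takeW (m+1) h α) (takeW (m+1) h β)
          * R2entry X (k-m) (castW (by omega) (dropW (m+1) α))
              (castW (by omega) (dropW (m+1) β))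
      else 0) (k+1)]
  refine Finset.sum_congr rfl (fun i _ => ?_)
  have hi : (i : ℕ) + 1 ≤ k + 1 := i.isLt
  have h1 : 1 ≤ ((i.succ : Fin (k+2)) : ℕ) := by simp
  rw [if_pos h1, dif_pos hi]
  rw [R2entry_castW X (show (k+1) - ((i:ℕ)+1) = k - (i:ℕ) by omega)]
  rfl

def joinW {a n : ℕ} (h : a ≤ n) (γ : Word d a) (ρ : Word d (n - a)) : Word d n :=
  fun i => if hi : (i : ℕ) < a then γ ⟨i, hi⟩
    else ρ ⟨(i : ℕ) - a, by have := i.isLt; omega⟩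

lemma takeW_joinW {a n : ℕ} (h : a ≤ n) (γ : Word d a) (ρ : Word d (n - a)) :
    takeW a h (joinW h γ ρ) = γ := by
  funext j
  have hj := j.isLt
  simp only [takeW, joinW, dif_pos hj]

lemma dropW_joinW {a n : ℕ} (h : a ≤ n) (γ : Word d a) (ρ : Word d (n - a)) :
    dropW a (joinW h γ ρ) = ρ := by
  funext j
  have hj := j.isLt
  have hge : ¬ ((a + (j : ℕ)) < a) := by omega
  simp only [dropW, joinW, dif_neg hge]
  refine congrArg ρ (Fin.ext ?_)
  simp

lemma joinW_take_drop {a n : ℕ} (h : a ≤ n) (α : Word d n) :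
    joinW h (takeW a h α) (dropW a α) = α := by
  funext i
  by_cases hi : (i : ℕ) < a
  · simp only [joinW, dif_pos hi, takeW]
  · simp only [joinW, dif_neg hi, dropW]
    refine congrArg α (Fin.ext ?_)
    have := i.isLt
    simp
    omega

lemma sum_joinW {M : Type*} [AddCommMonoid M] {a n : ℕ} (h : a ≤ n) (F : Word d n → M) :
    ∑ α : Word d n, F α = ∑ γ : Word d a, ∑ ρ : Word d (n - a), F (joinW h γ ρ) := by
  have hbij : Function.Bijective (fun p : Word d a × Word d (n - a) => joinW h p.1 p.2) := by
    rw [Function.bijective_iff_has_inverse]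
    exact ⟨fun α => (takeW a h α, dropW a α), fun p => by
        simp [takeW_joinW h p.1 p.2, dropW_joinW h p.1 p.2],
      fun α => joinW_take_drop h α⟩
  calc ∑ α : Word d n, F α
      = ∑ p : Word d a × Word d (n - a), F (joinW h p.1 p.2) :=
        (Fintype.sum_bijective _ hbij _ _ (fun p => rfl)).symm
    _ = ∑ γ : Word d a, ∑ ρ : Word d (n - a), F (joinW h γ ρ) :=
        Fintype.sum_prod_type (f := fun p : Word d a × Word d (n - a) => F (joinW h p.1 p.2))

lemma sum_castW {M : Type*} [AddCommMonoid M] {n n' : ℕ} (h : n = n') (F : Word d n' → M) :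
    ∑ ρ' : Word d n', F ρ' = ∑ ρ : Word d n, F (castW h ρ) := by
  subst h
  exact (Finset.sum_congr rfl (fun ρ _ => by rw [castW_rfl])).symm

end CastW

section TwordSplit
variable {H : Type*} [NormedAddCommGroup H] [InnerProductSpace ℂ H]
  {d : ℕ} (T : Fin d → H →L[ℂ] H)

lemma Tword_castW {n n' : ℕ} (h : n = n') (α : Word d n) :
    Tword T (castW h α) = Tword T α := by subst h; rw [castW_rfl]

lemma Tword_take_drop (a : ℕ) {n : ℕ} (h : a ≤ n) (α : Word d n) :
    Tword T α = Tword T (takeW a h α) ∘L Tword T (dropW a α) := by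
  have hl : (List.ofFn (fun i : Fin a => T (takeW a h α i))
      ++ List.ofFn (fun j : Fin (n - a) => T (dropW a α j)))
      = List.ofFn (fun i : Fin n => T (α i)) := by
    refine List.ext_getElem (by simp; omega) ?_
    intro i hi1 hi2
    simp only [List.length_append, List.length_ofFn] at hi1
    by_cases hia : i < a
    · rw [List.getElem_append_left (by simp [hia])]
      simp only [List.getElem_ofFn]
      rfl
    · rw [List.getElem_append_right (by simp; omega)]
      simp only [List.getElem_ofFn]
      refine congrArg T (congrArg α (Fin.ext ?_))
      simp only [takeW, dropW, List.length_ofFn]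
      omega
  rw [Tword, ← hl, List.prod_append]
  rfl

end TwordSplit

section Ops
variable {H : Type*} [NormedAddCommGroup H] [InnerProductSpace ℂ H] [CompleteSpace H] {d : ℕ}

noncomputable def psiOp (T : Fin d → H →L[ℂ] H)
    (X : (k : ℕ) → Matrix (Word d k) (Word d k) ℂ) (m : ℕ) (a : H →L[ℂ] H) : H →L[ℂ] H :=
  ∑ γ : Word d m, ∑ γ' : Word d m,
    X m γ γ' • (Tword T γ ∘L (a ∘L ContinuousLinearMap.adjoint (Tword T γ')))

noncomputable def BOp (T : Fin d → H →L[ℂ] H)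
    (X : (k : ℕ) → Matrix (Word d k) (Word d k) ℂ) (k : ℕ) (a : H →L[ℂ] H) : H →L[ℂ] H :=
  ∑ α : Word d k, ∑ β : Word d k,
    R2entry X k α β • (Tword T α ∘L (a ∘L ContinuousLinearMap.adjoint (Tword T β)))

noncomputable def WW (T : Fin d → H →L[ℂ] H)
    (A : (m : ℕ) → Matrix (Word d (m+1)) (Word d (m+1)) ℂ)
    (m : ℕ) (ε : Word d (m+1)) (x : H) : H :=
  ∑ γ : Word d (m+1), A m ε γ • (ContinuousLinearMap.adjoint (Tword T γ)) x

noncomputable def qq (T : Fin d → H →L[ℂ] H)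
    (X : (k : ℕ) → Matrix (Word d k) (Word d k) ℂ)
    (A : (m : ℕ) → Matrix (Word d (m+1)) (Word d (m+1)) ℂ)
    (Φ : (H →L[ℂ] H) → (H →L[ℂ] H)) : ℕ → H → H → ℂ
  | 0 => fun x y => inner ℂ x (Φ 1 y)
  | (n+1) => fun x y =>
      ((inner ℂ x (Φ 1 y) : ℂ) - ∑ m ∈ Finset.range (n+1), (inner ℂ x (psiOp T X (m+1) 1 y) : ℂ))
      + ∑ m ∈ Finset.range (n+1), ∑ ε : Word d (m+1),
          qq T X A Φ (n - m) (WW T A m ε x) (WW T A m ε y)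
  termination_by n => n
  decreasing_by omega

variable (T : Fin d → H →L[ℂ] H) (X : (k : ℕ) → Matrix (Word d k) (Word d k) ℂ)
  (A : (m : ℕ) → Matrix (Word d (m+1)) (Word d (m+1)) ℂ)
  (Φ : (H →L[ℂ] H) → (H →L[ℂ] H))

lemma inner_psiOp (m : ℕ) (a : H →L[ℂ] H) (x y : H) :
    (inner ℂ x (psiOp T X m a y) : ℂ)
      = ∑ γ : Word d m, ∑ γ' : Word d m, X m γ γ' *
          (inner ℂ ((ContinuousLinearMap.adjoint (Tword T γ)) x)
            (a ((ContinuousLinearMap.adjoint (Tword T γ')) y)) : ℂ) := by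
  simp only [psiOp, ContinuousLinearMap.sum_apply, inner_sum, ContinuousLinearMap.smul_apply,
    inner_smul_right, ContinuousLinearMap.comp_apply, ContinuousLinearMap.adjoint_inner_left]

lemma inner_BOp (k : ℕ) (a : H →L[ℂ] H) (x y : H) :
    (inner ℂ x (BOp T X k a y) : ℂ)
      = ∑ α : Word d k, ∑ β : Word d k, R2entry X k α β *
          (inner ℂ ((ContinuousLinearMap.adjoint (Tword T α)) x)
            (a ((ContinuousLinearMap.adjoint (Tword T β)) y)) : ℂ) := by
  simp only [BOp, ContinuousLinearMap.sum_apply, inner_sum, ContinuousLinearMap.smul_apply,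
    inner_smul_right, ContinuousLinearMap.comp_apply, ContinuousLinearMap.adjoint_inner_left]

lemma BOp_zero (a : H →L[ℂ] H) : BOp T X 0 a = a := by
  rw [BOp, Fintype.sum_unique, Fintype.sum_unique, R2entry_zero, one_smul]
  have h1 : Tword T (default : Word d 0) = 1 := Tword_nil T _
  rw [h1]
  have h2 : ContinuousLinearMap.adjoint (1 : H →L[ℂ] H) = 1 := by
    rw [ContinuousLinearMap.one_def, ContinuousLinearMap.adjoint_id]
  rw [h2]
  ext z; simp

lemma hasSum_psi
    (hΦ : ∀ (a : H →L[ℂ] H) (g h : H),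
      HasSum (fun p : Σ k : ℕ, Word d (k+1) × Word d (k+1) =>
        X (p.1+1) p.2.1 p.2.2 *
          (inner ℂ g (Tword T p.2.1 (a ((ContinuousLinearMap.adjoint (Tword T p.2.2)) h))) : ℂ))
        (inner ℂ g (Φ a h)))
    (a : H →L[ℂ] H) (x y : H) :
    HasSum (fun m : ℕ => (inner ℂ x (psiOp T X (m+1) a y) : ℂ)) (inner ℂ x (Φ a y)) := by
  refine (hΦ a x y).sigma (fun m => ?_)
  have : ∑ p : Word d (m+1) × Word d (m+1),
      X (m+1) p.1 p.2 * (inner ℂ x (Tword T p.1 (a ((ContinuousLinearMap.adjoint (Tword T p.2)) y))) : ℂ)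
      = (inner ℂ x (psiOp T X (m+1) a y) : ℂ) := by
    rw [inner_psiOp, Fintype.sum_prod_type]
    refine Finset.sum_congr rfl (fun γ _ => Finset.sum_congr rfl (fun γ' _ => ?_))
    rw [ContinuousLinearMap.adjoint_inner_left]
  exact this ▸ hasSum_fintype _

lemma sum_WW_inner (hA : ∀ m, (A m)ᴴ * A m = X (m+1)) (m : ℕ) (b : H →L[ℂ] H) (x y : H) :
    ∑ ε : Word d (m+1), (inner ℂ (WW T A m ε x) (b (WW T A m ε y)) : ℂ)
      = inner ℂ x (psiOp T X (m+1) b y) := by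
  rw [inner_psiOp]
  have step : ∀ ε : Word d (m+1), (inner ℂ (WW T A m ε x) (b (WW T A m ε y)) : ℂ)
      = ∑ γ : Word d (m+1), ∑ γ' : Word d (m+1),
          (starRingEnd ℂ) (A m ε γ) * A m ε γ' *
            (inner ℂ ((ContinuousLinearMap.adjoint (Tword T γ)) x)
              (b ((ContinuousLinearMap.adjoint (Tword T γ')) y)) : ℂ) := by
    intro ε
    rw [WW, WW, map_sum, sum_inner]
    refine Finset.sum_congr rfl (fun γ _ => ?_)
    rw [inner_sum]
    refine Finset.sum_congr rfl (fun γ' _ => ?_)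
    rw [map_smul, inner_smul_left, inner_smul_right]
    ring
  rw [Finset.sum_congr rfl (fun ε _ => step ε), Finset.sum_comm]
  refine Finset.sum_congr rfl (fun γ _ => ?_)
  rw [Finset.sum_comm]
  refine Finset.sum_congr rfl (fun γ' _ => ?_)
  rw [← Finset.sum_mul]
  congr 1
  have : X (m+1) γ γ' = ((A m)ᴴ * A m) γ γ' := by rw [hA]
  rw [this, Matrix.mul_apply]
  refine Finset.sum_congr rfl (fun ε _ => ?_)
  rw [Matrix.conjTranspose_apply]
  rfl

lemma inner_BOp_succ (k : ℕ) (a : H →L[ℂ] H) (x y : H) :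
    (inner ℂ x (BOp T X (k+1) a y) : ℂ)
      = ∑ m ∈ Finset.range (k+1), (inner ℂ x (psiOp T X (m+1) (BOp T X (k-m) a) y) : ℂ) := by
  rw [inner_BOp]
  have expand : ∀ α β : Word d (k+1),
      R2entry X (k+1) α β *
        (inner ℂ ((ContinuousLinearMap.adjoint (Tword T α)) x)
          (a ((ContinuousLinearMap.adjoint (Tword T β)) y)) : ℂ)
      = ∑ m ∈ Finset.range (k+1),
        (if h : m + 1 ≤ k + 1 then
          X (m+1) (takeW (m+1) h α) (takeW (m+1) h β)
            * R2entry X (k-m) (castW (by omega) (dropW (m+1) α))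
                (castW (by omega) (dropW (m+1) β))
          * (inner ℂ ((ContinuousLinearMap.adjoint (Tword T α)) x)
              (a ((ContinuousLinearMap.adjoint (Tword T β)) y)) : ℂ)
        else 0) := by
    intro α β
    rw [R2entry_succ', Finset.sum_mul]
    refine Finset.sum_congr rfl (fun m hm => ?_)
    have hm1 : m + 1 ≤ k + 1 := by have := Finset.mem_range.mp hm; omega
    rw [dif_pos hm1, dif_pos hm1]
  rw [Finset.sum_congr rfl (fun α (_ : α ∈ Finset.univ) =>
    Finset.sum_congr rfl (fun β (_ : β ∈ Finset.univ) => expand α β))]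
  rw [Finset.sum_congr rfl (fun α (_ : α ∈ Finset.univ) => Finset.sum_comm), Finset.sum_comm]
  refine Finset.sum_congr rfl (fun m hm => ?_)
  have hm1 : m + 1 ≤ k + 1 := by have := Finset.mem_range.mp hm; omega
  have ekm : k + 1 - (m + 1) = k - m := by omega
  simp only [dif_pos hm1]
  -- split each word sum
  rw [sum_joinW hm1, Finset.sum_congr rfl (fun γ (_ : γ ∈ Finset.univ) =>
    Finset.sum_congr rfl (fun ρ (_ : ρ ∈ Finset.univ) => sum_joinW hm1 _))]
  have hsplit : ∀ (γ : Word d (m+1)) (ρ : Word d (k+1-(m+1))) (z : H),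
      (ContinuousLinearMap.adjoint (Tword T (joinW hm1 γ ρ))) z
        = (ContinuousLinearMap.adjoint (Tword T ρ)) ((ContinuousLinearMap.adjoint (Tword T γ)) z) := by
    intro γ ρ z
    rw [Tword_take_drop T (m+1) hm1 (joinW hm1 γ ρ), takeW_joinW, dropW_joinW,
      ContinuousLinearMap.adjoint_comp]
    rfl
  -- now rewrite RHS
  rw [inner_psiOp]
  refine Finset.sum_congr rfl (fun γ _ => ?_)
  rw [Finset.sum_comm]
  refine Finset.sum_congr rfl (fun γ' _ => ?_)
  rw [inner_BOp, sum_castW ekm, Finset.mul_sum]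
  refine Finset.sum_congr rfl (fun ρ _ => ?_)
  rw [sum_castW ekm, Finset.mul_sum]
  refine Finset.sum_congr rfl (fun ρ' _ => ?_)
  rw [takeW_joinW, takeW_joinW, dropW_joinW, dropW_joinW, hsplit, hsplit,
    Tword_castW T ekm ρ, Tword_castW T ekm ρ']
  ring

end Ops
section Main
variable {H : Type*} [NormedAddCommGroup H] [InnerProductSpace ℂ H] [CompleteSpace H] {d : ℕ}
variable (T : Fin d → H →L[ℂ] H) (X : (k : ℕ) → Matrix (Word d k) (Word d k) ℂ)
  (A : (m : ℕ) → Matrix (Word d (m+1)) (Word d (m+1)) ℂ)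
  (Φ : (H →L[ℂ] H) → (H →L[ℂ] H))

lemma sum_triangle {M : Type*} [AddCommMonoid M] (n : ℕ) (F : ℕ → ℕ → M) :
    ∑ m ∈ Finset.range (n+1), ∑ k ∈ Finset.range (n+1-m), F m k
      = ∑ s ∈ Finset.range (n+1), ∑ m ∈ Finset.range (s+1), F m (s-m) := by
  induction n with
  | zero => simp
  | succ n ih =>
      have hL : ∑ m ∈ Finset.range (n+1+1), ∑ k ∈ Finset.range (n+1+1-m), F m k
          = (∑ m ∈ Finset.range (n+1), ∑ k ∈ Finset.range (n+1-m), F m k)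
            + ∑ m ∈ Finset.range (n+1+1), F m (n+1-m) := by
        rw [Finset.sum_range_succ]
        rw [Finset.sum_range_succ (fun m => F m (n+1-m)) (n+1)]
        have hmid : ∀ m ∈ Finset.range (n+1), ∑ k ∈ Finset.range (n+2-m), F m k
            = ∑ k ∈ Finset.range (n+1-m), F m k + F m (n+1-m) := by
          intro m hm
          have hm' := Finset.mem_range.mp hm
          have e : n+1+1-m = (n+1-m)+1 := by omega
          rw [e, Finset.sum_range_succ]
        rw [Finset.sum_congr rfl hmid, Finset.sum_add_distrib]
        have e2 : n+1+1-(n+1) = 1 := by omega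
        rw [e2, Finset.sum_range_one]
        have e3 : n+1-(n+1) = 0 := by omega
        rw [e3]
        abel
      rw [hL, ih, Finset.sum_range_succ (fun s => ∑ m ∈ Finset.range (s+1), F m (s-m)) (n+1)]

lemma main_identity (hA : ∀ m, (A m)ᴴ * A m = X (m+1)) (n : ℕ) :
    ∀ (x y : H), (inner ℂ x y : ℂ) - qq T X A Φ n x y
      = ∑ k ∈ Finset.range (n+1),
          (inner ℂ x (BOp T X k ((1 : H →L[ℂ] H) - Φ 1) y) : ℂ) := by
  induction n using Nat.strong_induction_on with
  | _ n ih =>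
    cases n with
    | zero =>
        intro x y
        rw [qq, Finset.sum_range_one, BOp_zero]
        simp only [ContinuousLinearMap.sub_apply, inner_sub_right, ContinuousLinearMap.one_apply]
    | succ n =>
        intro x y
        simp only [qq]
        -- abbreviations
        have hb1 : ∀ m : ℕ, ∑ ε : Word d (m+1),
            (inner ℂ (WW T A m ε x) (WW T A m ε y) : ℂ)
              = inner ℂ x (psiOp T X (m+1) 1 y) := by
          intro m
          have := sum_WW_inner T X A hA m 1 x y
          simpa using this
        have hblock : ∀ m ∈ Finset.range (n+1),
            ∑ ε : Word d (m+1), qq T X A Φ (n - m) (WW T A m ε x) (WW T A m ε y)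
              = (inner ℂ x (psiOp T X (m+1) 1 y) : ℂ)
                - ∑ k ∈ Finset.range (n+1-m),
                    (inner ℂ x (psiOp T X (m+1) (BOp T X k ((1 : H →L[ℂ] H) - Φ 1)) y) : ℂ) := by
          intro m hm
          have hmn := Finset.mem_range.mp hm
          have hihm : ∀ (u v : H), qq T X A Φ (n-m) u v
              = (inner ℂ u v : ℂ) - ∑ k ∈ Finset.range ((n-m)+1),
                  (inner ℂ u (BOp T X k ((1 : H →L[ℂ] H) - Φ 1) v) : ℂ) := by
            intro u v
            have := ih (n-m) (by omega) u v
            linear_combination -this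
          rw [Finset.sum_congr rfl (fun ε _ => hihm (WW T A m ε x) (WW T A m ε y))]
          rw [Finset.sum_sub_distrib, hb1 m]
          congr 1
          rw [Finset.sum_comm]
          have erange : (n-m)+1 = n+1-m := by omega
          rw [erange]
          refine Finset.sum_congr rfl (fun k _ => ?_)
          exact sum_WW_inner T X A hA m (BOp T X k ((1 : H →L[ℂ] H) - Φ 1)) x y
        rw [Finset.sum_congr rfl hblock, Finset.sum_sub_distrib]
        have htri : ∑ m ∈ Finset.range (n+1), ∑ k ∈ Finset.range (n+1-m),
            (inner ℂ x (psiOp T X (m+1) (BOp T X k ((1 : H →L[ℂ] H) - Φ 1)) y) : ℂ)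
            = ∑ s ∈ Finset.range (n+1),
                (inner ℂ x (BOp T X (s+1) ((1 : H →L[ℂ] H) - Φ 1) y) : ℂ) := by
          rw [sum_triangle]
          refine Finset.sum_congr rfl (fun s _ => ?_)
          exact (inner_BOp_succ T X s ((1 : H →L[ℂ] H) - Φ 1) x y).symm
        rw [htri]
        rw [Finset.sum_range_succ' (fun k =>
          (inner ℂ x (BOp T X k ((1 : H →L[ℂ] H) - Φ 1) y) : ℂ)) (n+1)]
        rw [BOp_zero]
        simp only [ContinuousLinearMap.sub_apply, inner_sub_right, ContinuousLinearMap.one_apply]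
        ring

end Main
section Analysis
variable {H : Type*} [NormedAddCommGroup H] [InnerProductSpace ℂ H] [CompleteSpace H] {d : ℕ}
variable (T : Fin d → H →L[ℂ] H) (X : (k : ℕ) → Matrix (Word d k) (Word d k) ℂ)
  (A : (m : ℕ) → Matrix (Word d (m+1)) (Word d (m+1)) ℂ)
  (Φ : (H →L[ℂ] H) → (H →L[ℂ] H))

lemma re_inner_self (w : H) : (inner ℂ w w : ℂ).re = ‖w‖^2 :=
  inner_self_eq_norm_sq (𝕜 := ℂ) w

lemma sum_WW_norm (hA : ∀ m, (A m)ᴴ * A m = X (m+1)) (m : ℕ) (x : H) :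
    (inner ℂ x (psiOp T X (m+1) 1 x) : ℂ).re = ∑ ε : Word d (m+1), ‖WW T A m ε x‖^2 := by
  rw [← sum_WW_inner T X A hA m 1 x x, Complex.re_sum]
  refine Finset.sum_congr rfl (fun ε _ => ?_)
  rw [ContinuousLinearMap.one_apply, re_inner_self]

lemma psi_one_re_nonneg (hA : ∀ m, (A m)ᴴ * A m = X (m+1)) (m : ℕ) (x : H) :
    0 ≤ (inner ℂ x (psiOp T X (m+1) 1 x) : ℂ).re := by
  rw [sum_WW_norm T X A hA m x]
  positivity

lemma hasSum_psi_re
    (hΦ : ∀ (a : H →L[ℂ] H) (g h : H),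
      HasSum (fun p : Σ k : ℕ, Word d (k+1) × Word d (k+1) =>
        X (p.1+1) p.2.1 p.2.2 *
          (inner ℂ g (Tword T p.2.1 (a ((ContinuousLinearMap.adjoint (Tword T p.2.2)) h))) : ℂ))
        (inner ℂ g (Φ a h)))
    (a : H →L[ℂ] H) (x : H) :
    HasSum (fun m : ℕ => (inner ℂ x (psiOp T X (m+1) a x) : ℂ).re)
      ((inner ℂ x (Φ a x) : ℂ).re) := by
  have := (hasSum_psi T X Φ hΦ a x x).mapL Complex.reCLM
  simpa using this

lemma pos_iter
    (hΦ : ∀ (a : H →L[ℂ] H) (g h : H),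
      HasSum (fun p : Σ k : ℕ, Word d (k+1) × Word d (k+1) =>
        X (p.1+1) p.2.1 p.2.2 *
          (inner ℂ g (Tword T p.2.1 (a ((ContinuousLinearMap.adjoint (Tword T p.2.2)) h))) : ℂ))
        (inner ℂ g (Φ a h)))
    (hA : ∀ m, (A m)ᴴ * A m = X (m+1)) :
    ∀ (L : ℕ) (v : H), 0 ≤ (inner ℂ v ((Φ^[L] 1) v) : ℂ).re := by
  intro L
  induction L with
  | zero =>
      intro v
      simp only [Function.iterate_zero, id_eq, ContinuousLinearMap.one_apply]
      rw [re_inner_self]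
      positivity
  | succ L ihL =>
      intro v
      rw [Function.iterate_succ_apply']
      refine hasSum_le (fun m => ?_) hasSum_zero (hasSum_psi_re T X Φ hΦ (Φ^[L] 1) v)
      have heq : (inner ℂ v (psiOp T X (m+1) (Φ^[L] 1) v) : ℂ).re
          = ∑ ε : Word d (m+1),
              (inner ℂ (WW T A m ε v) ((Φ^[L] 1) (WW T A m ε v)) : ℂ).re := by
        rw [← sum_WW_inner T X A hA m (Φ^[L] 1) v v, Complex.re_sum]
      rw [heq]
      exact Finset.sum_nonneg (fun ε _ => ihL _)

lemma qq_nonneg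
    (hΦ : ∀ (a : H →L[ℂ] H) (g h : H),
      HasSum (fun p : Σ k : ℕ, Word d (k+1) × Word d (k+1) =>
        X (p.1+1) p.2.1 p.2.2 *
          (inner ℂ g (Tword T p.2.1 (a ((ContinuousLinearMap.adjoint (Tword T p.2.2)) h))) : ℂ))
        (inner ℂ g (Φ a h)))
    (hA : ∀ m, (A m)ᴴ * A m = X (m+1)) :
    ∀ (n : ℕ) (x : H), 0 ≤ (qq T X A Φ n x x).re := by
  intro n
  induction n using Nat.strong_induction_on with
  | _ n ih =>
    cases n with
    | zero =>
        intro x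
        have h := pos_iter T X A Φ hΦ hA 1 x
        rw [Function.iterate_one] at h
        simp only [qq]
        exact h
    | succ n =>
        intro x
        simp only [qq, Complex.add_re, Complex.sub_re, Complex.re_sum]
        have t1 : ∑ m ∈ Finset.range (n+1), (inner ℂ x (psiOp T X (m+1) 1 x) : ℂ).re
            ≤ (inner ℂ x (Φ 1 x) : ℂ).re :=
          sum_le_hasSum _ (fun m _ => psi_one_re_nonneg T X A hA m x)
            (hasSum_psi_re T X Φ hΦ 1 x)
        have t2 : 0 ≤ ∑ m ∈ Finset.range (n+1), ∑ ε : Word d (m+1),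
            (qq T X A Φ (n-m) (WW T A m ε x) (WW T A m ε x)).re :=
          Finset.sum_nonneg (fun m _ => Finset.sum_nonneg (fun ε _ => ih (n-m) (by omega) _))
        linarith

lemma BOp_delta_eq (R : (k : ℕ) → Matrix (Word d k) (Word d k) ℂ)
    (hRpos : ∀ k, (R k).PosSemidef)
    (hRsq : ∀ k, R k * R k = Matrix.of (R2entry X k))
    (Δ : H →L[ℂ] H) (hΔsa : ContinuousLinearMap.adjoint Δ = Δ)
    (hΔsq : Δ ∘L Δ = 1 - Φ 1) (k : ℕ) (x : H) :
    (inner ℂ x (BOp T X k ((1 : H →L[ℂ] H) - Φ 1) x) : ℂ)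
      = ∑ αw : Word d k,
          (inner ℂ (∑ β : Word d k, R k αw β • Δ ((ContinuousLinearMap.adjoint (Tword T β)) x))
            (∑ β : Word d k, R k αw β • Δ ((ContinuousLinearMap.adjoint (Tword T β)) x)) : ℂ) := by
  rw [inner_BOp]
  have hd : ∀ u v : H, (inner ℂ (Δ u) (Δ v) : ℂ)
      = inner ℂ u ((((1 : H →L[ℂ] H) - Φ 1)) v) := by
    intro u v
    rw [← ContinuousLinearMap.adjoint_inner_right, hΔsa]
    have h2 : Δ (Δ v) = (Δ ∘L Δ) v := rfl
    rw [h2, hΔsq]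
  have hherm : ∀ a b : Word d k, (starRingEnd ℂ) (R k a b) = R k b a := by
    intro a b
    have h2 : (R k)ᴴ = R k := (hRpos k).isHermitian
    calc (starRingEnd ℂ) (R k a b) = (R k)ᴴ b a := rfl
      _ = R k b a := by rw [h2]
  have hRR : ∀ β β' : Word d k,
      ∑ αw : Word d k, (starRingEnd ℂ) (R k αw β) * R k αw β' = R2entry X k β β' := by
    intro β β'
    calc ∑ αw : Word d k, (starRingEnd ℂ) (R k αw β) * R k αw β'
        = ∑ αw : Word d k, R k β αw * R k αw β' :=
          Finset.sum_congr rfl (fun a _ => by rw [hherm])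
      _ = (R k * R k) β β' := (Matrix.mul_apply).symm
      _ = R2entry X k β β' := by rw [hRsq k]; rfl
  symm
  calc ∑ αw : Word d k,
        (inner ℂ (∑ β : Word d k, R k αw β • Δ ((ContinuousLinearMap.adjoint (Tword T β)) x))
          (∑ β : Word d k, R k αw β • Δ ((ContinuousLinearMap.adjoint (Tword T β)) x)) : ℂ)
      = ∑ αw : Word d k, ∑ β : Word d k, ∑ β' : Word d k,
          (starRingEnd ℂ) (R k αw β) * R k αw β' *
            (inner ℂ (Δ ((ContinuousLinearMap.adjoint (Tword T β)) x))
              (Δ ((ContinuousLinearMap.adjoint (Tword T β')) x)) : ℂ) := by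
        refine Finset.sum_congr rfl (fun αw _ => ?_)
        rw [sum_inner]
        refine Finset.sum_congr rfl (fun β _ => ?_)
        rw [inner_sum]
        refine Finset.sum_congr rfl (fun β' _ => ?_)
        rw [inner_smul_left, inner_smul_right]
        ring
    _ = ∑ β : Word d k, ∑ β' : Word d k,
          (∑ αw : Word d k, (starRingEnd ℂ) (R k αw β) * R k αw β') *
            (inner ℂ (Δ ((ContinuousLinearMap.adjoint (Tword T β)) x))
              (Δ ((ContinuousLinearMap.adjoint (Tword T β')) x)) : ℂ) := by
        rw [Finset.sum_comm]
        refine Finset.sum_congr rfl (fun β _ => ?_)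
        rw [Finset.sum_comm]
        refine Finset.sum_congr rfl (fun β' _ => ?_)
        rw [Finset.sum_mul]
    _ = ∑ β : Word d k, ∑ β' : Word d k,
          R2entry X k β β' *
            (inner ℂ ((ContinuousLinearMap.adjoint (Tword T β)) x)
              ((((1 : H →L[ℂ] H) - Φ 1)) ((ContinuousLinearMap.adjoint (Tword T β')) x)) : ℂ) := by
        refine Finset.sum_congr rfl (fun β _ => Finset.sum_congr rfl (fun β' _ => ?_))
        rw [hRR, hd]

lemma BOp_delta_re (R : (k : ℕ) → Matrix (Word d k) (Word d k) ℂ)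
    (hRpos : ∀ k, (R k).PosSemidef)
    (hRsq : ∀ k, R k * R k = Matrix.of (R2entry X k))
    (Δ : H →L[ℂ] H) (hΔsa : ContinuousLinearMap.adjoint Δ = Δ)
    (hΔsq : Δ ∘L Δ = 1 - Φ 1) (k : ℕ) (x : H) :
    (inner ℂ x (BOp T X k ((1 : H →L[ℂ] H) - Φ 1) x) : ℂ).re
      = ∑ αw : Word d k,
          ‖∑ β : Word d k, R k αw β • Δ ((ContinuousLinearMap.adjoint (Tword T β)) x)‖^2 := by
  rw [BOp_delta_eq T X Φ R hRpos hRsq Δ hΔsa hΔsq k x, Complex.re_sum]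
  exact Finset.sum_congr rfl (fun αw _ => re_inner_self _)

lemma qq_le (hA : ∀ m, (A m)ᴴ * A m = X (m+1))
    (R : (k : ℕ) → Matrix (Word d k) (Word d k) ℂ)
    (hRpos : ∀ k, (R k).PosSemidef)
    (hRsq : ∀ k, R k * R k = Matrix.of (R2entry X k))
    (Δ : H →L[ℂ] H) (hΔsa : ContinuousLinearMap.adjoint Δ = Δ)
    (hΔsq : Δ ∘L Δ = 1 - Φ 1) (n : ℕ) (x : H) :
    (qq T X A Φ n x x).re ≤ ‖x‖^2 := by
  have h := main_identity T X A Φ hA n x x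
  have h2 := congrArg Complex.re h
  rw [Complex.sub_re, Complex.re_sum, re_inner_self] at h2
  have h3 : 0 ≤ ∑ k ∈ Finset.range (n+1),
      (inner ℂ x (BOp T X k ((1 : H →L[ℂ] H) - Φ 1) x) : ℂ).re := by
    refine Finset.sum_nonneg (fun k _ => ?_)
    rw [BOp_delta_re T X Φ R hRpos hRsq Δ hΔsa hΔsq k x]
    positivity
  linarith

end Analysis
section EpsN
variable {H : Type*} [NormedAddCommGroup H] [InnerProductSpace ℂ H] [CompleteSpace H] {d : ℕ}
variable (T : Fin d → H →L[ℂ] H) (X : (k : ℕ) → Matrix (Word d k) (Word d k) ℂ)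
  (A : (m : ℕ) → Matrix (Word d (m+1)) (Word d (m+1)) ℂ)
  (Φ : (H →L[ℂ] H) → (H →L[ℂ] H))

lemma qq_eventually_le
    (hΦ : ∀ (a : H →L[ℂ] H) (g h : H),
      HasSum (fun p : Σ k : ℕ, Word d (k+1) × Word d (k+1) =>
        X (p.1+1) p.2.1 p.2.2 *
          (inner ℂ g (Tword T p.2.1 (a ((ContinuousLinearMap.adjoint (Tword T p.2.2)) h))) : ℂ))
        (inner ℂ g (Φ a h)))
    (hA : ∀ m, (A m)ᴴ * A m = X (m+1))
    (R : (k : ℕ) → Matrix (Word d k) (Word d k) ℂ)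
    (hRpos : ∀ k, (R k).PosSemidef)
    (hRsq : ∀ k, R k * R k = Matrix.of (R2entry X k))
    (Δ : H →L[ℂ] H) (hΔsa : ContinuousLinearMap.adjoint Δ = Δ)
    (hΔsq : Δ ∘L Δ = 1 - Φ 1) :
    ∀ (L : ℕ) (x : H) (ε : ℝ), 0 < ε → ∃ N : ℕ, ∀ n ≥ N,
      (qq T X A Φ n x x).re ≤ (inner ℂ x ((Φ^[L] 1) x) : ℂ).re + ε := by
  intro L
  induction L with
  | zero =>
      intro x ε hε
      refine ⟨0, fun n _ => ?_⟩
      have h1 := qq_le T X A Φ hA R hRpos hRsq Δ hΔsa hΔsq n x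
      have h2 : (inner ℂ x ((Φ^[0] 1) x) : ℂ).re = ‖x‖^2 := by
        simp only [Function.iterate_zero, id_eq, ContinuousLinearMap.one_apply]
        exact re_inner_self x
      linarith
  | succ L ihL =>
      intro x ε hε
      have hnn : ∀ m : ℕ, 0 ≤ (inner ℂ x (psiOp T X (m+1) 1 x) : ℂ).re :=
        fun m => psi_one_re_nonneg T X A hA m x
      have hsum : HasSum (fun m : ℕ => (inner ℂ x (psiOp T X (m+1) 1 x) : ℂ).re)
          ((inner ℂ x (Φ 1 x) : ℂ).re) := hasSum_psi_re T X Φ hΦ 1 x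
      have hpartial : ∀ n : ℕ, ∑ m ∈ Finset.range n, (inner ℂ x (psiOp T X (m+1) 1 x) : ℂ).re
          ≤ (inner ℂ x (Φ 1 x) : ℂ).re :=
        fun n => sum_le_hasSum _ (fun m _ => hnn m) hsum
      -- choose M
      obtain ⟨M, hM⟩ : ∃ M : ℕ, (inner ℂ x (Φ 1 x) : ℂ).re
          - ∑ m ∈ Finset.range M, (inner ℂ x (psiOp T X (m+1) 1 x) : ℂ).re < ε/3 := by
        have h3 : (0:ℝ) < ε/3 := by linarith
        rcases Metric.tendsto_atTop.mp hsum.tendsto_sum_nat (ε/3) h3 with ⟨M, hM⟩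
        refine ⟨M, ?_⟩
        have h4 := hM M (le_refl M)
        rw [Real.dist_eq] at h4
        have h5 := abs_lt.mp h4
        linarith [h5.1]
      set D : ℝ := ∑ m ∈ Finset.range M, (Fintype.card (Word d (m+1)) : ℝ) with hD
      have hD0 : 0 ≤ D := Finset.sum_nonneg (fun m _ => by positivity)
      set εw : ℝ := ε/(3*(D+1)) with hεw
      have hεw0 : 0 < εw := by rw [hεw]; positivity
      -- eventual bound from the inductive hypothesis, for all the finitely many W-vectors
      have hev2 : ∀ᶠ j in atTop, ∀ m ∈ Finset.range M, ∀ e : Word d (m+1),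
          (qq T X A Φ j (WW T A m e x) (WW T A m e x)).re
            ≤ (inner ℂ (WW T A m e x) ((Φ^[L] 1) (WW T A m e x)) : ℂ).re + εw := by
        rw [Filter.eventually_all_finset]
        intro m _
        rw [Filter.eventually_all]
        intro e
        rcases ihL (WW T A m e x) εw hεw0 with ⟨N, hN⟩
        exact Filter.eventually_atTop.mpr ⟨N, hN⟩
      rcases Filter.eventually_atTop.mp hev2 with ⟨N₀, hN₀⟩
      refine ⟨N₀ + M + 1, fun n hn => ?_⟩
      obtain ⟨n', rfl⟩ : ∃ n', n = n'+1 := ⟨n-1, by omega⟩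
      have hn'M : M ≤ n' := by omega
      simp only [qq, Complex.add_re, Complex.sub_re, Complex.re_sum]
      -- the three pieces
      have tail1 : (inner ℂ x (Φ 1 x) : ℂ).re
          - ∑ m ∈ Finset.range (n'+1), (inner ℂ x (psiOp T X (m+1) 1 x) : ℂ).re ≤ ε/3 := by
        have hmono : ∑ m ∈ Finset.range M, (inner ℂ x (psiOp T X (m+1) 1 x) : ℂ).re
            ≤ ∑ m ∈ Finset.range (n'+1), (inner ℂ x (psiOp T X (m+1) 1 x) : ℂ).re :=
          Finset.sum_le_sum_of_subset_of_nonneg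
            (Finset.range_subset_range.mpr (by omega)) (fun m _ _ => hnn m)
        linarith
      have hBle : ∀ m : ℕ, ∑ e : Word d (m+1),
          (qq T X A Φ (n'-m) (WW T A m e x) (WW T A m e x)).re
            ≤ (inner ℂ x (psiOp T X (m+1) 1 x) : ℂ).re := by
        intro m
        calc ∑ e : Word d (m+1), (qq T X A Φ (n'-m) (WW T A m e x) (WW T A m e x)).re
            ≤ ∑ e : Word d (m+1), ‖WW T A m e x‖^2 :=
              Finset.sum_le_sum (fun e _ =>
                qq_le T X A Φ hA R hRpos hRsq Δ hΔsa hΔsq (n'-m) (WW T A m e x))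
          _ = (inner ℂ x (psiOp T X (m+1) 1 x) : ℂ).re := (sum_WW_norm T X A hA m x).symm
      have hsplit : ∑ m ∈ Finset.range (n'+1), ∑ e : Word d (m+1),
            (qq T X A Φ (n'-m) (WW T A m e x) (WW T A m e x)).re
          = (∑ m ∈ Finset.range M, ∑ e : Word d (m+1),
              (qq T X A Φ (n'-m) (WW T A m e x) (WW T A m e x)).re)
            + ∑ m ∈ Finset.Ico M (n'+1), ∑ e : Word d (m+1),
              (qq T X A Φ (n'-m) (WW T A m e x) (WW T A m e x)).re :=
        (Finset.sum_range_add_sum_Ico _ (by omega)).symm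
      have mid : ∑ m ∈ Finset.Ico M (n'+1), ∑ e : Word d (m+1),
          (qq T X A Φ (n'-m) (WW T A m e x) (WW T A m e x)).re ≤ ε/3 := by
        have h6 : ∑ m ∈ Finset.Ico M (n'+1), ∑ e : Word d (m+1),
            (qq T X A Φ (n'-m) (WW T A m e x) (WW T A m e x)).re
              ≤ ∑ m ∈ Finset.Ico M (n'+1), (inner ℂ x (psiOp T X (m+1) 1 x) : ℂ).re :=
          Finset.sum_le_sum (fun m _ => hBle m)
        have h7 : ∑ m ∈ Finset.range M, (inner ℂ x (psiOp T X (m+1) 1 x) : ℂ).re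
            + ∑ m ∈ Finset.Ico M (n'+1), (inner ℂ x (psiOp T X (m+1) 1 x) : ℂ).re
            = ∑ m ∈ Finset.range (n'+1), (inner ℂ x (psiOp T X (m+1) 1 x) : ℂ).re :=
          Finset.sum_range_add_sum_Ico _ (by omega)
        have h8 := hpartial (n'+1)
        linarith
      have main : ∑ m ∈ Finset.range M, ∑ e : Word d (m+1),
          (qq T X A Φ (n'-m) (WW T A m e x) (WW T A m e x)).re
            ≤ (inner ℂ x ((Φ^[L+1] 1) x) : ℂ).re + ε/3 := by
        have hterms_nonneg : ∀ m : ℕ, 0 ≤ (inner ℂ x (psiOp T X (m+1) (Φ^[L] 1) x) : ℂ).re := by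
          intro m
          have heq : (inner ℂ x (psiOp T X (m+1) (Φ^[L] 1) x) : ℂ).re
              = ∑ e : Word d (m+1),
                  (inner ℂ (WW T A m e x) ((Φ^[L] 1) (WW T A m e x)) : ℂ).re := by
            rw [← sum_WW_inner T X A hA m (Φ^[L] 1) x x, Complex.re_sum]
          rw [heq]
          exact Finset.sum_nonneg (fun e _ => pos_iter T X A Φ hΦ hA L _)
        have per : ∀ m ∈ Finset.range M, ∑ e : Word d (m+1),
            (qq T X A Φ (n'-m) (WW T A m e x) (WW T A m e x)).re
              ≤ (inner ℂ x (psiOp T X (m+1) (Φ^[L] 1) x) : ℂ).re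
                + (Fintype.card (Word d (m+1)) : ℝ) * εw := by
          intro m hm
          have hj : N₀ ≤ n' - m := by
            have := Finset.mem_range.mp hm; omega
          calc ∑ e : Word d (m+1), (qq T X A Φ (n'-m) (WW T A m e x) (WW T A m e x)).re
              ≤ ∑ e : Word d (m+1),
                  ((inner ℂ (WW T A m e x) ((Φ^[L] 1) (WW T A m e x)) : ℂ).re + εw) :=
                Finset.sum_le_sum (fun e _ => hN₀ (n'-m) hj m hm e)
            _ = (∑ e : Word d (m+1),
                  (inner ℂ (WW T A m e x) ((Φ^[L] 1) (WW T A m e x)) : ℂ).re)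
                + (Fintype.card (Word d (m+1)) : ℝ) * εw := by
                rw [Finset.sum_add_distrib, Finset.sum_const, nsmul_eq_mul]
                congr 1
            _ = (inner ℂ x (psiOp T X (m+1) (Φ^[L] 1) x) : ℂ).re
                + (Fintype.card (Word d (m+1)) : ℝ) * εw := by
                congr 1
                rw [← sum_WW_inner T X A hA m (Φ^[L] 1) x x, Complex.re_sum]
        have hsum2 : HasSum (fun m : ℕ => (inner ℂ x (psiOp T X (m+1) (Φ^[L] 1) x) : ℂ).re)
            ((inner ℂ x (Φ (Φ^[L] 1) x) : ℂ).re) := hasSum_psi_re T X Φ hΦ (Φ^[L] 1) x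
        have h9 : ∑ m ∈ Finset.range M, (inner ℂ x (psiOp T X (m+1) (Φ^[L] 1) x) : ℂ).re
            ≤ (inner ℂ x (Φ (Φ^[L] 1) x) : ℂ).re :=
          sum_le_hasSum _ (fun m _ => hterms_nonneg m) hsum2
        have h10 : ∑ m ∈ Finset.range M, ∑ e : Word d (m+1),
            (qq T X A Φ (n'-m) (WW T A m e x) (WW T A m e x)).re
              ≤ (∑ m ∈ Finset.range M, (inner ℂ x (psiOp T X (m+1) (Φ^[L] 1) x) : ℂ).re)
                + D * εw := by
          calc ∑ m ∈ Finset.range M, ∑ e : Word d (m+1),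
              (qq T X A Φ (n'-m) (WW T A m e x) (WW T A m e x)).re
              ≤ ∑ m ∈ Finset.range M, ((inner ℂ x (psiOp T X (m+1) (Φ^[L] 1) x) : ℂ).re
                  + (Fintype.card (Word d (m+1)) : ℝ) * εw) := Finset.sum_le_sum per
            _ = (∑ m ∈ Finset.range M, (inner ℂ x (psiOp T X (m+1) (Φ^[L] 1) x) : ℂ).re)
                + D * εw := by
                rw [Finset.sum_add_distrib, ← Finset.sum_mul]
        have h1 : (0:ℝ) < D + 1 := by linarith
        have hεweq : εw * (3*(D+1)) = ε := by
          rw [hεw]; field_simp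
        have hDε : D * εw ≤ ε/3 := by nlinarith [hεw0.le, hD0, hεweq]
        have h11 : (inner ℂ x (Φ (Φ^[L] 1) x) : ℂ).re = (inner ℂ x ((Φ^[L+1] 1) x) : ℂ).re := by
          rw [Function.iterate_succ_apply']
        linarith
      linarith

end EpsN
section FinalHelp
variable {H : Type*} [NormedAddCommGroup H] [InnerProductSpace ℂ H] [CompleteSpace H] {d : ℕ}
variable (T : Fin d → H →L[ℂ] H) (X : (k : ℕ) → Matrix (Word d k) (Word d k) ℂ)
  (A : (m : ℕ) → Matrix (Word d (m+1)) (Word d (m+1)) ℂ)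
  (Φ : (H →L[ℂ] H) → (H →L[ℂ] H))

lemma qq_tendsto_zero
    (hΦ : ∀ (a : H →L[ℂ] H) (g h : H),
      HasSum (fun p : Σ k : ℕ, Word d (k+1) × Word d (k+1) =>
        X (p.1+1) p.2.1 p.2.2 *
          (inner ℂ g (Tword T p.2.1 (a ((ContinuousLinearMap.adjoint (Tword T p.2.2)) h))) : ℂ))
        (inner ℂ g (Φ a h)))
    (hA : ∀ m, (A m)ᴴ * A m = X (m+1))
    (R : (k : ℕ) → Matrix (Word d k) (Word d k) ℂ)
    (hRpos : ∀ k, (R k).PosSemidef)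
    (hRsq : ∀ k, R k * R k = Matrix.of (R2entry X k))
    (Δ : H →L[ℂ] H) (hΔsa : ContinuousLinearMap.adjoint Δ = Δ)
    (hΔsq : Δ ∘L Δ = 1 - Φ 1)
    (hpure : ∀ h : H, Tendsto (fun n : ℕ => (Φ^[n] 1) h) atTop (nhds 0)) (h : H) :
    Tendsto (fun n => (qq T X A Φ n h h).re) atTop (nhds 0) := by
  rw [Metric.tendsto_atTop]
  intro ε hε
  have hL : Tendsto (fun L : ℕ => (inner ℂ h ((Φ^[L] 1) h) : ℂ).re) atTop (nhds 0) := by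
    have h1 : Tendsto (fun L : ℕ => (inner ℂ h ((Φ^[L] 1) h) : ℂ)) atTop
        (nhds (inner ℂ h (0 : H))) :=
      Filter.Tendsto.inner tendsto_const_nhds (hpure h)
    rw [inner_zero_right] at h1
    have h2 : Tendsto (fun L : ℕ => (inner ℂ h ((Φ^[L] 1) h) : ℂ).re) atTop
        (nhds ((0:ℂ).re)) := (Complex.continuous_re.tendsto 0).comp h1
    simpa using h2
  obtain ⟨L, hL2⟩ := Metric.tendsto_atTop.mp hL (ε/2) (by linarith)
  have hL3 : (inner ℂ h ((Φ^[L] 1) h) : ℂ).re < ε/2 := by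
    have := hL2 L (le_refl L)
    rw [Real.dist_eq, sub_zero] at this
    exact lt_of_le_of_lt (le_abs_self _) this
  obtain ⟨N, hN⟩ := qq_eventually_le T X A Φ hΦ hA R hRpos hRsq Δ hΔsa hΔsq L h (ε/2)
    (by linarith)
  refine ⟨N, fun n hn => ?_⟩
  have h3 := hN n hn
  have h4 : 0 ≤ (qq T X A Φ n h h).re := qq_nonneg T X A Φ hΦ hA n h
  rw [Real.dist_eq, sub_zero, abs_of_nonneg h4]
  linarith

end FinalHelp
/-- for a commuting contractive pure tuple `T`, the Poisson-type map
`Π(T) h = ⊕_k (R_k ⊗ Δ_*(T)) T^{(k)*} h` into `F(R) ⊗ 𝒟_*` is a well-defined isometry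
(expressed by the `HasSum` of the squared norms of its components to `‖h‖²`), and it
intertwines: `Π(T) T_i^* = (W_i^* ⊗ I) Π(T)` (expressed componentwise). -/
theorem stmt16 {H : Type*} [NormedAddCommGroup H] [InnerProductSpace ℂ H] [CompleteSpace H]
    {d : ℕ} (T : Fin d → H →L[ℂ] H)
    (hcomm : ∀ i j, T i ∘L T j = T j ∘L T i)
    (X : (k : ℕ) → Matrix (Word d k) (Word d k) ℂ) (hX : Admissible X)
    (R Rinv : (k : ℕ) → Matrix (Word d k) (Word d k) ℂ)
    (hRpos : ∀ k, (R k).PosSemidef)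
    (hRsq : ∀ k, R k * R k = Matrix.of (R2entry X k))
    (hRinv : ∀ k, R k * Rinv k = 1 ∧ Rinv k * R k = 1)
    (Φ : (H →L[ℂ] H) → (H →L[ℂ] H))
    (hΦ : ∀ (a : H →L[ℂ] H) (g h : H),
      HasSum (fun p : Σ k : ℕ, Word d (k+1) × Word d (k+1) =>
        X (p.1+1) p.2.1 p.2.2 *
          (inner ℂ g (Tword T p.2.1 (a ((ContinuousLinearMap.adjoint (Tword T p.2.2)) h))) : ℂ))
        (inner ℂ g (Φ a h)))
    (hcontr : ((1 : H →L[ℂ] H) - Φ 1).IsPositive)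
    (hpure : ∀ h : H, Tendsto (fun n : ℕ => (Φ^[n] 1) h) atTop (nhds 0))
    (Δ : H →L[ℂ] H) (hΔpos : Δ.IsPositive) (hΔsq : Δ ∘L Δ = 1 - Φ 1) :
    (∀ h : H,
      HasSum (fun p : Σ k : ℕ, Word d k =>
        ‖∑ β : Word d p.1, R p.1 p.2 β • Δ ((ContinuousLinearMap.adjoint (Tword T β)) h)‖ ^ 2)
        (‖h‖ ^ 2)) ∧
    (∀ (i : Fin d) (k : ℕ) (α : Word d k) (h : H),
      (∑ β : Word d k,
        R k α β • Δ ((ContinuousLinearMap.adjoint (Tword T β))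
          ((ContinuousLinearMap.adjoint (T i)) h))) =
      ∑ γ : Word d (k+1), (starRingEnd ℂ) ((Zmat R Rinv k * LiMat d k i) γ α) •
        (∑ β : Word d (k+1),
          R (k+1) γ β • Δ ((ContinuousLinearMap.adjoint (Tword T β)) h))) := by
  classical
  have hXfact : ∀ m : ℕ, ∃ B : Matrix (Word d (m+1)) (Word d (m+1)) ℂ, X (m+1) = Bᴴ * B :=
    fun m => by open scoped MatrixOrder in exact CStarAlgebra.nonneg_iff_eq_star_mul_self.mp (hX.1 (m+1) (by omega)).nonneg
  choose A hA using hXfact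
  have hA' : ∀ m, (A m)ᴴ * A m = X (m+1) := fun m => (hA m).symm
  have hΔsa : ContinuousLinearMap.adjoint Δ = Δ :=
    ContinuousLinearMap.isSelfAdjoint_iff'.mp hΔpos.isSelfAdjoint
  constructor
  · intro h
    set σ : ℕ → ℝ := fun k => ∑ αw : Word d k,
      ‖∑ β : Word d k, R k αw β • Δ ((ContinuousLinearMap.adjoint (Tword T β)) h)‖^2 with hσ
    have hσeq : ∀ n : ℕ, ∑ k ∈ Finset.range (n+1), σ k
        = ‖h‖^2 - (qq T X A Φ n h h).re := by
      intro n
      have h1 := congrArg Complex.re (main_identity T X A Φ hA' n h h)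
      rw [Complex.sub_re, Complex.re_sum, re_inner_self] at h1
      have h2 : ∀ k ∈ Finset.range (n+1), σ k
          = (inner ℂ h (BOp T X k ((1 : H →L[ℂ] H) - Φ 1) h) : ℂ).re :=
        fun k _ => (BOp_delta_re T X Φ R hRpos hRsq Δ hΔsa hΔsq k h).symm
      rw [Finset.sum_congr rfl h2]
      linarith
    have htend0 := qq_tendsto_zero T X A Φ hΦ hA' R hRpos hRsq Δ hΔsa hΔsq hpure h
    have htend1 : Tendsto (fun n : ℕ => ∑ k ∈ Finset.range (n+1), σ k) atTop
        (nhds (‖h‖^2)) := by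
      have heq : (fun n : ℕ => ∑ k ∈ Finset.range (n+1), σ k)
          = fun n => ‖h‖^2 - (qq T X A Φ n h h).re := funext hσeq
      rw [heq]
      simpa using tendsto_const_nhds.sub htend0
    have htend : Tendsto (fun n : ℕ => ∑ k ∈ Finset.range n, σ k) atTop (nhds (‖h‖^2)) :=
      (tendsto_add_atTop_iff_nat 1).mp htend1
    have hσnn : ∀ k, 0 ≤ σ k := fun k => Finset.sum_nonneg (fun _ _ => by positivity)
    have hHasσ : HasSum σ (‖h‖^2) := (hasSum_iff_tendsto_nat_of_nonneg hσnn _).mpr htend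
    set F : (Σ k : ℕ, Word d k) → ℝ := fun p =>
      ‖∑ β : Word d p.1, R p.1 p.2 β • Δ ((ContinuousLinearMap.adjoint (Tword T β)) h)‖ ^ 2
      with hF
    have hFnn : ∀ p, 0 ≤ F p := fun p => by positivity
    have hfib : ∀ k, Summable (fun αw : Word d k => F ⟨k, αw⟩) := fun k => Summable.of_finite
    have hsummable : Summable F := by
      rw [summable_sigma_of_nonneg hFnn]
      refine ⟨hfib, ?_⟩
      have heq2 : (fun k => ∑' αw : Word d k, F ⟨k, αw⟩) = σ :=
        funext (fun k => by rw [tsum_fintype])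
      rw [heq2]
      exact hHasσ.summable
    have htsum : ∑' p, F p = ‖h‖^2 := by
      rw [hsummable.tsum_sigma]
      calc ∑' k, ∑' αw : Word d k, F ⟨k, αw⟩ = ∑' k, σ k := by
            refine tsum_congr (fun k => ?_)
            rw [tsum_fintype]
        _ = ‖h‖^2 := hHasσ.tsum_eq
    have hfinal := hsummable.hasSum
    rw [htsum] at hfinal
    exact hfinal
  · intro i k α h
    exact part2 T R Rinv hRpos hRinv Δ i k α h
end
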